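/- arXiv:2303.11084 — 2 statements merged into one kernel-verified Lean document; each statement's English description precedes it below -/
import Mathlib

section
/- Let I = [-π, π] ⊂ ℝ with Lebesgue measure, let n be a natural number, let μ_0, …, μ_n ≥ 0 be nonnegative reals, let f_0, …, f_n : ℝ → ℝ be measurable with f_k ≥ 0 on I and f_k integrable on I, and suppose Φ(θ) = Σ_{k=0}^{n} μ_k f_k(θ) for all θ ∈ I. Let Φ̃ : ℝ → ℝ be measurable with Φ̃ > 0 on I, such that Φ·log Φ, Φ·log Φ̃, and f_k·Φ̃ are integrable on I for every k. If b_0, …, b_n ∈ ℝ satisfy ∫_I f_k Φ̃ dθ − ∫_I f_k dθ ≤ b_k for every k, then KL(Φ‖Φ̃) = ∫_I Φ log(Φ/Φ̃) dθ ≥ −Σ_{k=0}^{n} μ_k b_k − H(Φ), where H(Φ) = −∫_I Φ log Φ dθ. -/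
open MeasureTheory Real Set

/-- If Φ = Σ_k μ_k f_k on I = [-π, π] with μ_k ≥ 0 and f_k ≥ 0 integrable,
Φ̃ > 0 on I, and ∫_I f_k Φ̃ − ∫_I f_k ≤ b_k for each k, then
KL(Φ‖Φ̃) ≥ −Σ_k μ_k b_k − H(Φ), where H(Φ) = −∫_I Φ log Φ. -/
theorem kl_lower_bound_covariance_lags
    (n : ℕ) (μ : Fin (n + 1) → ℝ) (hμ : ∀ k, 0 ≤ μ k)
    (f : Fin (n + 1) → ℝ → ℝ) (hfmeas : ∀ k, Measurable (f k))
    (hfnonneg : ∀ k, ∀ θ ∈ Icc (-π) π, 0 ≤ f k θ)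
    (hfint : ∀ k, IntegrableOn (f k) (Icc (-π) π))
    (Φ : ℝ → ℝ) (hΦ : ∀ θ ∈ Icc (-π) π, Φ θ = ∑ k, μ k * f k θ)
    (Φt : ℝ → ℝ) (hΦtmeas : Measurable Φt)
    (hΦtpos : ∀ θ ∈ Icc (-π) π, 0 < Φt θ)
    (hΦlogΦ : IntegrableOn (fun θ => Φ θ * Real.log (Φ θ)) (Icc (-π) π))
    (hΦlogΦt : IntegrableOn (fun θ => Φ θ * Real.log (Φt θ)) (Icc (-π) π))
    (hfΦt : ∀ k, IntegrableOn (fun θ => f k θ * Φt θ) (Icc (-π) π))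
    (b : Fin (n + 1) → ℝ)
    (hb : ∀ k, (∫ θ in Icc (-π) π, f k θ * Φt θ) - (∫ θ in Icc (-π) π, f k θ) ≤ b k) :
    (∫ θ in Icc (-π) π, Φ θ * Real.log (Φ θ / Φt θ))
      ≥ -(∑ k, μ k * b k) - (-∫ θ in Icc (-π) π, Φ θ * Real.log (Φ θ)) := by
  set I := Icc (-π) π with hI
  have hIm : MeasurableSet I := measurableSet_Icc
  -- split the log
  have hsplit : (∫ θ in I, Φ θ * Real.log (Φ θ / Φt θ))
      = (∫ θ in I, Φ θ * Real.log (Φ θ)) - (∫ θ in I, Φ θ * Real.log (Φt θ)) := by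
    rw [← integral_sub hΦlogΦ hΦlogΦt]
    refine setIntegral_congr_fun hIm (fun θ hθ => ?_)
    by_cases h0 : Φ θ = 0
    · simp [h0]
    · rw [Real.log_div h0 (ne_of_gt (hΦtpos θ hθ))]
      ring
  -- auxiliary dominating function
  set g : ℝ → ℝ := fun θ => ∑ k, μ k * (f k θ * Φt θ - f k θ) with hg
  have hgint : IntegrableOn g I := by
    apply integrable_finset_sum
    intro k _
    exact (((hfΦt k).sub (hfint k)).const_mul (μ k))
  -- key bound on ∫ Φ log Φt
  have hkey : (∫ θ in I, Φ θ * Real.log (Φt θ)) ≤ ∫ θ in I, g θ := by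
    refine setIntegral_mono_on hΦlogΦt hgint hIm (fun θ hθ => ?_)
    have hlog : Real.log (Φt θ) ≤ Φt θ - 1 :=
      Real.log_le_sub_one_of_pos (hΦtpos θ hθ)
    have hΦnn : 0 ≤ Φ θ := by
      rw [hΦ θ hθ]
      exact Finset.sum_nonneg fun k _ => mul_nonneg (hμ k) (hfnonneg k θ hθ)
    calc Φ θ * Real.log (Φt θ) ≤ Φ θ * (Φt θ - 1) := by
          exact mul_le_mul_of_nonneg_left hlog hΦnn
      _ = g θ := by
          rw [hΦ θ hθ, hg]
          simp only [Finset.sum_mul]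
          exact Finset.sum_congr rfl fun k _ => by ring
  have hgval : (∫ θ in I, g θ)
      = ∑ k, μ k * ((∫ θ in I, f k θ * Φt θ) - ∫ θ in I, f k θ) := by
    simp only [hg]
    rw [integral_finset_sum (f := fun k θ => μ k * (f k θ * Φt θ - f k θ)) _
      (fun k _ => ((hfΦt k).sub (hfint k)).const_mul (μ k))]
    refine Finset.sum_congr rfl fun k _ => ?_
    rw [MeasureTheory.integral_const_mul, integral_sub (hfΦt k) (hfint k)]
  have hsum : (∫ θ in I, g θ) ≤ ∑ k, μ k * b k := by
    rw [hgval]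
    exact Finset.sum_le_sum fun k _ => mul_le_mul_of_nonneg_left (hb k) (hμ k)
  rw [hsplit]
  linarith [le_trans hkey hsum]
end

section
/- Let I = [-π, π] ⊂ ℝ with Lebesgue measure, let n be a natural number, let g_0, …, g_n : ℝ → ℝ be continuous functions that are linearly independent as functions on I, let P : ℝ → ℝ be continuous with P > 0 on I, and let r ∈ ℝ^{n+1}. For q = (q_0, …, q_n) ∈ ℝ^{n+1} write Q_q(θ) = Σ_{k=0}^{n} q_k g_k(θ), and let D = { q ∈ ℝ^{n+1} : ∀ θ ∈ I, Q_q(θ) > 0 }. Then D is a convex set and the functional J(q) = Σ_{k=0}^{n} r_k q_k − ∫_I P(θ) log Q_q(θ) dθ is strictly convex on D. -/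
open MeasureTheory Real Set

/-- The cone D = {q : Q_q > 0 on I} is convex, and the dual functional
J(q) = ⟨r, q⟩ − ∫_I P log Q_q is strictly convex on D, for P continuous and positive on
I = [-π, π] and g_0, …, g_n continuous and linearly independent on I. -/
theorem dual_functional_strictly_convex
    (n : ℕ) (g : Fin (n + 1) → ℝ → ℝ) (hg : ∀ k, Continuous (g k))
    (hli : LinearIndependent ℝ fun k => (Icc (-π) π).restrict (g k))
    (P : ℝ → ℝ) (hP : Continuous P) (hPpos : ∀ θ ∈ Icc (-π) π, 0 < P θ)
    (r : Fin (n + 1) → ℝ) :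
    Convex ℝ {q : Fin (n + 1) → ℝ | ∀ θ ∈ Icc (-π) π, 0 < ∑ k, q k * g k θ} ∧
    StrictConvexOn ℝ {q : Fin (n + 1) → ℝ | ∀ θ ∈ Icc (-π) π, 0 < ∑ k, q k * g k θ}
      (fun q => (∑ k, r k * q k)
        - ∫ θ in Icc (-π) π, P θ * Real.log (∑ k, q k * g k θ)) := by
  have hπ : (-π) < π := by linarith [Real.pi_pos]
  set S : Set ℝ := Icc (-π) π with hSdef
  -- sum expansion under convex combination
  have hsum : ∀ (x y : Fin (n+1) → ℝ) (a b : ℝ) (θ : ℝ),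
      ∑ k, (a • x + b • y) k * g k θ
        = a * (∑ k, x k * g k θ) + b * (∑ k, y k * g k θ) := by
    intro x y a b θ
    simp only [Pi.add_apply, Pi.smul_apply, smul_eq_mul, add_mul, Finset.sum_add_distrib,
      Finset.mul_sum, mul_assoc]
  have hDconv : Convex ℝ {q : Fin (n + 1) → ℝ | ∀ θ ∈ Icc (-π) π, 0 < ∑ k, q k * g k θ} := by
    intro x hx y hy a b ha hb hab θ hθ
    have h1 := hx θ hθ
    have h2 := hy θ hθ
    rw [hsum]
    rcases eq_or_lt_of_le ha with h | h
    · have hb1 : b = 1 := by linarith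
      simp [← h, hb1, h2]
    · have := mul_pos h h1
      nlinarith [mul_nonneg hb h2.le]
  -- continuity of Q_q
  have hQc : ∀ q : Fin (n+1) → ℝ, Continuous fun θ => ∑ k, q k * g k θ := by
    intro q
    exact continuous_finset_sum _ fun k _ => continuous_const.mul (hg k)
  -- continuity on S of the integrand
  have hFc : ∀ q : Fin (n+1) → ℝ, (∀ θ ∈ S, 0 < ∑ k, q k * g k θ) →
      ContinuousOn (fun θ => P θ * Real.log (∑ k, q k * g k θ)) S := by
    intro q hq
    exact hP.continuousOn.mul ((hQc q).continuousOn.log fun θ hθ => (hq θ hθ).ne')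
  have hInt : ∀ q : Fin (n+1) → ℝ, (∀ θ ∈ S, 0 < ∑ k, q k * g k θ) →
      IntegrableOn (fun θ => P θ * Real.log (∑ k, q k * g k θ)) S := by
    intro q hq
    exact (hFc q hq).integrableOn_Icc
  refine ⟨hDconv, hDconv, ?_⟩
  intro x hx y hy hxy a b ha hb hab
  simp only [Set.mem_setOf_eq] at hx hy
  set z : Fin (n+1) → ℝ := a • x + b • y with hzdef
  have hz : ∀ θ ∈ S, 0 < ∑ k, z k * g k θ := hDconv hx hy ha.le hb.le hab
  -- a point where Q_x ≠ Q_y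
  have hex : ∃ θ₀ ∈ S, (∑ k, x k * g k θ₀) ≠ ∑ k, y k * g k θ₀ := by
    by_contra hcon
    push_neg at hcon
    apply hxy
    have hz0 : (∑ k, (x k - y k) • (Icc (-π) π).restrict (g k)) = 0 := by
      funext θ
      simp only [Finset.sum_apply, Pi.smul_apply, Set.restrict_apply, smul_eq_mul,
        Pi.zero_apply, sub_mul, Finset.sum_sub_distrib]
      have := hcon θ.1 θ.2
      show ∑ k, x k * g k θ.1 - ∑ k, y k * g k θ.1 = 0
      linarith
    have := Fintype.linearIndependent_iff.mp hli (fun k => x k - y k) hz0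
    funext k
    have hk := this k
    have : x k - y k = 0 := hk
    linarith
  obtain ⟨θ₀, hθ₀S, hθ₀ne⟩ := hex
  -- pointwise concavity inequality
  have key : ∀ θ ∈ S,
      a * (P θ * Real.log (∑ k, x k * g k θ)) + b * (P θ * Real.log (∑ k, y k * g k θ))
        ≤ P θ * Real.log (∑ k, z k * g k θ) := by
    intro θ hθ
    rw [hsum]
    have hX := hx θ hθ
    have hY := hy θ hθ
    have hlog := strictConcaveOn_log_Ioi.concaveOn.2 (Set.mem_Ioi.mpr hX)
      (Set.mem_Ioi.mpr hY) ha.le hb.le hab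
    simp only [smul_eq_mul] at hlog
    have hPnn := (hPpos θ hθ).le
    nlinarith [mul_le_mul_of_nonneg_left hlog hPnn]
  have keystrict :
      a * (P θ₀ * Real.log (∑ k, x k * g k θ₀)) + b * (P θ₀ * Real.log (∑ k, y k * g k θ₀))
        < P θ₀ * Real.log (∑ k, z k * g k θ₀) := by
    rw [hsum]
    have hX := hx θ₀ hθ₀S
    have hY := hy θ₀ hθ₀S
    have hlog := strictConcaveOn_log_Ioi.2 (Set.mem_Ioi.mpr hX)
      (Set.mem_Ioi.mpr hY) hθ₀ne ha hb hab
    simp only [smul_eq_mul] at hlog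
    have hPp := hPpos θ₀ hθ₀S
    nlinarith [mul_lt_mul_of_pos_left hlog hPp]
  -- the gap function
  set h : ℝ → ℝ := fun θ => P θ * Real.log (∑ k, z k * g k θ)
      - (a * (P θ * Real.log (∑ k, x k * g k θ)) + b * (P θ * Real.log (∑ k, y k * g k θ)))
      with hhdef
  have hIx := hInt x hx
  have hIy := hInt y hy
  have hIz := hInt z hz
  have hIh : IntegrableOn h S := hIz.sub ((hIx.const_mul a).add (hIy.const_mul b))
  have hhc : ContinuousOn h S :=
    (hFc z hz).sub (((hFc x hx).const_smul a).add ((hFc y hy).const_smul b))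
  -- h is nonneg on S and positive at θ₀
  have hhnn : ∀ θ ∈ S, 0 ≤ h θ := fun θ hθ => by
    have := key θ hθ; simp only [hhdef]; linarith
  have hhpos : 0 < h θ₀ := by simp only [hhdef]; linarith [keystrict]
  -- neighborhood where h > 0
  have hcw : ContinuousWithinAt h S θ₀ := hhc.continuousWithinAt hθ₀S
  have hmem : h ⁻¹' Set.Ioi 0 ∈ nhdsWithin θ₀ S := hcw (Ioi_mem_nhds hhpos)
  obtain ⟨ε, hε, hball⟩ := Metric.mem_nhdsWithin_iff.mp hmem
  set c := max (-π) (θ₀ - ε) with hcdef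
  set d := min π (θ₀ + ε) with hddef
  have hcd : c < d := by
    rw [hcdef, hddef]
    have h1 := hθ₀S.1
    have h2 := hθ₀S.2
    apply max_lt <;> [skip; skip] <;> apply lt_min <;> linarith
  have hsub : Set.Ioo c d ⊆ Function.support h ∩ S := by
    intro θ hθ
    have hθS : θ ∈ S := ⟨le_of_lt (lt_of_le_of_lt (le_max_left _ _) hθ.1),
      le_of_lt (lt_of_lt_of_le hθ.2 (min_le_left _ _))⟩
    have hθb : θ ∈ Metric.ball θ₀ ε := by
      have h1 : θ₀ - ε < θ := lt_of_le_of_lt (le_max_right _ _) hθ.1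
      have h2 : θ < θ₀ + ε := lt_of_lt_of_le hθ.2 (min_le_right _ _)
      rw [Metric.mem_ball, Real.dist_eq, abs_lt]
      constructor <;> linarith
    have : θ ∈ h ⁻¹' Set.Ioi 0 := hball ⟨hθb, hθS⟩
    exact ⟨ne_of_gt this, hθS⟩
  have hμpos : 0 < volume (Function.support h ∩ S) := by
    calc 0 < volume (Set.Ioo c d) := by simp [Real.volume_Ioo, hcd]
    _ ≤ volume (Function.support h ∩ S) := measure_mono hsub
  have hintpos : 0 < ∫ θ in S, h θ := by
    rw [MeasureTheory.setIntegral_pos_iff_support_of_nonneg_ae]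
    · exact hμpos
    · exact (ae_restrict_iff' measurableSet_Icc).mpr (ae_of_all _ hhnn)
    · exact hIh
  -- unfold integral of h
  have hintegral : ∫ θ in S, h θ
      = (∫ θ in S, P θ * Real.log (∑ k, z k * g k θ))
        - (a * ∫ θ in S, P θ * Real.log (∑ k, x k * g k θ))
        - (b * ∫ θ in S, P θ * Real.log (∑ k, y k * g k θ)) := by
    have hW : IntegrableOn (fun θ => a * (P θ * Real.log (∑ k, x k * g k θ))
        + b * (P θ * Real.log (∑ k, y k * g k θ))) S :=
      (hIx.const_mul a).add (hIy.const_mul b)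
    have e1 : ∫ θ in S, h θ
        = (∫ θ in S, P θ * Real.log (∑ k, z k * g k θ))
          - ∫ θ in S, (a * (P θ * Real.log (∑ k, x k * g k θ))
            + b * (P θ * Real.log (∑ k, y k * g k θ))) :=
      MeasureTheory.integral_sub hIz hW
    have e2 : ∫ θ in S, (a * (P θ * Real.log (∑ k, x k * g k θ))
          + b * (P θ * Real.log (∑ k, y k * g k θ)))
        = (a * ∫ θ in S, P θ * Real.log (∑ k, x k * g k θ))
          + (b * ∫ θ in S, P θ * Real.log (∑ k, y k * g k θ)) := by
      rw [MeasureTheory.integral_add (hIx.const_mul a) (hIy.const_mul b),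
        MeasureTheory.integral_const_mul, MeasureTheory.integral_const_mul]
    rw [e1, e2]
    ring
  have hIneq : a * (∫ θ in S, P θ * Real.log (∑ k, x k * g k θ))
      + b * (∫ θ in S, P θ * Real.log (∑ k, y k * g k θ))
      < ∫ θ in S, P θ * Real.log (∑ k, z k * g k θ) := by
    have := hintpos
    rw [hintegral] at this
    linarith
  -- linear part
  have hlin : (∑ k, r k * z k) = a * (∑ k, r k * x k) + b * (∑ k, r k * y k) := by
    simp only [hzdef, Pi.add_apply, Pi.smul_apply, smul_eq_mul, mul_add, Finset.sum_add_distrib,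
      Finset.mul_sum]
    congr 1 <;> apply Finset.sum_congr rfl <;> intro k _ <;> ring
  show (∑ k, r k * z k) - (∫ θ in S, P θ * Real.log (∑ k, z k * g k θ))
      < a * ((∑ k, r k * x k) - ∫ θ in S, P θ * Real.log (∑ k, x k * g k θ))
      + b * ((∑ k, r k * y k) - ∫ θ in S, P θ * Real.log (∑ k, y k * g k θ))
  rw [hlin]
  ring_nf
  ring_nf at hIneq
  linarith
end
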